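/- arXiv:1503.07079 — 3 statements merged into one kernel-verified Lean document; each statement's English description precedes it below -/
import Mathlib

section
/- Let g be a real Lie algebra decomposed as g = g₁ ⊕ z with g₁ = [g,g] semisimple and z the center, and let θ : g → End(n) be a representation on a finite-dimensional real inner product space n such that the symmetric parts S(θ(Z)), Z ∈ z, pairwise commute and commute with all θ(Y), Y ∈ g. Let n = n₁ ⊕ … ⊕ n_l be the orthogonal decomposition into common eigenspaces of {S(θ(Z)) : Z ∈ z} with weights α₁,…,α_l ∈ z*. Then for every Y ∈ g₁ and Z ∈ z, tr(S(θ(Y)) S(θ(Z))) = 0. -/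
/-!
Let `S = S(θ Z)`. It is self-adjoint and commutes with every `θ X`, hence also with every
`(θ X)ᵗ`. Since `S(θ ⁅A, B⁆) = ½ (⁅θ A, θ B⁆ + ⁅(θ B)ᵗ, (θ A)ᵗ⁆)` and
`tr (⁅A, B⁆ S) = tr (A ⁅B, S⁆)`, the linear functional `X ↦ tr (S(θ X) S)` vanishes on
brackets, hence on the derived algebra `[g, g]`.
-/

open Module

variable {n : Type*} [NormedAddCommGroup n] [InnerProductSpace ℝ n] [FiniteDimensional ℝ n]

attribute [local instance 100] LieRing.ofAssociativeRing

/-- The symmetric part `S(A) = (A + Aᵗ)/2` of an endomorphism of a finite-dimensional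
real inner product space. -/
noncomputable def symmPart (A : n →ₗ[ℝ] n) : n →ₗ[ℝ] n :=
  ((1 : ℝ) / 2) • (A + LinearMap.adjoint A)

lemma symmPart_eq_selfAdjointPart (A : Module.End ℝ n) :
    symmPart A = (selfAdjointPart ℝ A : Module.End ℝ n) := by
  rw [selfAdjointPart_apply_coe, LinearMap.star_eq_adjoint, symmPart, invOf_eq_inv, one_div]

lemma isSelfAdjoint_symmPart (A : Module.End ℝ n) : IsSelfAdjoint (symmPart A) := by
  rw [symmPart_eq_selfAdjointPart]
  exact (selfAdjointPart ℝ A).2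

lemma symmPart_lie (A B : Module.End ℝ n) :
    symmPart ⁅A, B⁆ = ((1 : ℝ) / 2) • (⁅A, B⁆ + ⁅star B, star A⁆) := by
  rw [symmPart, ← LinearMap.star_eq_adjoint, Ring.lie_def, Ring.lie_def, star_sub, star_mul,
    star_mul]

lemma trace_lie_mul_eq_zero_of_commute {R M : Type*} [CommRing R] [AddCommGroup M]
    [Module R M] (A : Module.End R M) {B S : Module.End R M} (h : Commute B S) :
    LinearMap.trace R M (⁅A, B⁆ * S) = 0 := by
  rw [LinearMap.trace_lie_mul_eq, commute_iff_lie_eq.mp h, mul_zero, map_zero]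

theorem trace_symmPart_mul_eq_zero_of_mem_derived {L : Type*} [LieRing L] [LieAlgebra ℝ L]
    (θ : L →ₗ⁅ℝ⁆ Module.End ℝ n) {S : Module.End ℝ n} (hS : IsSelfAdjoint S)
    (hθS : ∀ X, Commute (θ X) S) {Y : L} (hY : Y ∈ ⁅(⊤ : LieIdeal ℝ L), (⊤ : LieIdeal ℝ L)⁆) :
    LinearMap.trace ℝ n (symmPart (θ Y) * S) = 0 := by
  let f : L →ₗ[ℝ] ℝ := LinearMap.trace ℝ n ∘ₗ LinearMap.mulRight ℝ S ∘ₗ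
    (selfAdjoint.submodule ℝ (Module.End ℝ n)).subtype ∘ₗ selfAdjointPart ℝ ∘ₗ θ.toLinearMap
  have hf : ∀ X, f X = LinearMap.trace ℝ n (symmPart (θ X) * S) := fun X => by
    rw [symmPart_eq_selfAdjointPart]; rfl
  have hstar : ∀ X, Commute (star (θ X)) S := fun X => by
    simpa only [hS.star_eq] using (hθS X).star_star
  suffices ⁅(⊤ : LieIdeal ℝ L), (⊤ : LieIdeal ℝ L)⁆.toSubmodule ≤ LinearMap.ker f by
    rw [← hf]; exact this hY
  rw [LieSubmodule.lieIdeal_oper_eq_linear_span', Submodule.span_le]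
  rintro _ ⟨a, -, b, -, rfl⟩
  rw [SetLike.mem_coe, LinearMap.mem_ker, hf, LieHom.map_lie, symmPart_lie, smul_mul_assoc,
    add_mul, map_smul, map_add, trace_lie_mul_eq_zero_of_commute _ (hθS b),
    trace_lie_mul_eq_zero_of_commute _ (hstar a), add_zero, smul_zero]

theorem trace_symmPart_commutator_center_zero_general
    (g : Type*) [LieRing g] [LieAlgebra ℝ g]
    (θ : g →ₗ⁅ℝ⁆ Module.End ℝ n)
    (hcomm₂ : ∀ Z ∈ LieAlgebra.center ℝ g, ∀ Y : g,
      symmPart (θ Z) ∘ₗ θ Y = θ Y ∘ₗ symmPart (θ Z)) :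
    ∀ Y ∈ (⁅(⊤ : LieIdeal ℝ g), (⊤ : LieIdeal ℝ g)⁆ : LieIdeal ℝ g),
      ∀ Z ∈ LieAlgebra.center ℝ g,
        LinearMap.trace ℝ n (symmPart (θ Y) ∘ₗ symmPart (θ Z)) = 0 := by
  intro Y hY Z hZ
  exact trace_symmPart_mul_eq_zero_of_mem_derived θ (isSelfAdjoint_symmPart (θ Z))
    (fun X => (hcomm₂ Z hZ X).symm) hY

/-- Let `g = g₁ ⊕ z` with `g₁ = [g,g]` semisimple and `z` the center, and let
`θ : g → End(n)` be a representation on a finite-dimensional real inner product space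
such that the symmetric parts `S(θ Z)`, `Z ∈ z`, pairwise commute and commute with all
`θ Y`.  Then `tr (S(θ Y) S(θ Z)) = 0` for all `Y ∈ g₁`, `Z ∈ z`. -/
theorem trace_symmPart_commutator_center_zero
    (g : Type*) [LieRing g] [LieAlgebra ℝ g] [FiniteDimensional ℝ g]
    [LieAlgebra.IsSemisimple ℝ ↥(⁅(⊤ : LieIdeal ℝ g), (⊤ : LieIdeal ℝ g)⁆ : LieIdeal ℝ g)]
    (hsum : ∀ X : g, ∃ Y ∈ (⁅(⊤ : LieIdeal ℝ g), (⊤ : LieIdeal ℝ g)⁆ : LieIdeal ℝ g),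
      ∃ Z ∈ LieAlgebra.center ℝ g, X = Y + Z)
    (θ : g →ₗ⁅ℝ⁆ Module.End ℝ n)
    (hcomm₁ : ∀ Z ∈ LieAlgebra.center ℝ g, ∀ Z' ∈ LieAlgebra.center ℝ g,
      symmPart (θ Z) ∘ₗ symmPart (θ Z') = symmPart (θ Z') ∘ₗ symmPart (θ Z))
    (hcomm₂ : ∀ Z ∈ LieAlgebra.center ℝ g, ∀ Y : g,
      symmPart (θ Z) ∘ₗ θ Y = θ Y ∘ₗ symmPart (θ Z)) :
    ∀ Y ∈ (⁅(⊤ : LieIdeal ℝ g), (⊤ : LieIdeal ℝ g)⁆ : LieIdeal ℝ g),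
      ∀ Z ∈ LieAlgebra.center ℝ g,
        LinearMap.trace ℝ n (symmPart (θ Y) ∘ₗ symmPart (θ Z)) = 0 :=
  trace_symmPart_commutator_center_zero_general g θ hcomm₂
end

section
/- Let a, b, d, e be real numbers with a, b, e nonzero. Then the two real numbers P = (1/2)(a⁴e⁴ + (b² − d²)²) + a²d²(e² − 4b²)(e² + 4b²) and Q = (1/2)(a² − b² + d²)²e⁴ + 4a⁴b²(4b² − e²) cannot both be negative. -/
/-!
Every term of `P` and `Q` is a product of squares, except for one term in each that carries the
factor `e² - 4b²`, and it carries it with opposite signs in the two. Hence `P ≥ 0` when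
`4b² ≤ e²` and `Q ≥ 0` when `e² ≤ 4b²`.
-/

noncomputable section

def einsteinP (a b d e : ℝ) : ℝ :=
  (1/2) * (a ^ 4 * e ^ 4 + (b ^ 2 - d ^ 2) ^ 2)
    + a ^ 2 * d ^ 2 * (e ^ 2 - 4 * b ^ 2) * (e ^ 2 + 4 * b ^ 2)

def einsteinQ (a b d e : ℝ) : ℝ :=
  (1/2) * (a ^ 2 - b ^ 2 + d ^ 2) ^ 2 * e ^ 4 + 4 * a ^ 4 * b ^ 2 * (4 * b ^ 2 - e ^ 2)

theorem einsteinP_nonneg {b e : ℝ} (a d : ℝ) (h : 4 * b ^ 2 ≤ e ^ 2) :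
    0 ≤ einsteinP a b d e :=
  add_nonneg (by positivity) (mul_nonneg (mul_nonneg (by positivity) (sub_nonneg.2 h)) (by positivity))

theorem einsteinQ_nonneg {b e : ℝ} (a d : ℝ) (h : e ^ 2 ≤ 4 * b ^ 2) :
    0 ≤ einsteinQ a b d e :=
  add_nonneg (by positivity) (mul_nonneg (by positivity) (sub_nonneg.2 h))

end

theorem not_both_neg_general (a b d e : ℝ) :
    ¬ ((1/2) * (a ^ 4 * e ^ 4 + (b ^ 2 - d ^ 2) ^ 2)
          + a ^ 2 * d ^ 2 * (e ^ 2 - 4 * b ^ 2) * (e ^ 2 + 4 * b ^ 2) < 0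
        ∧ (1/2) * (a ^ 2 - b ^ 2 + d ^ 2) ^ 2 * e ^ 4
          + 4 * a ^ 4 * b ^ 2 * (4 * b ^ 2 - e ^ 2) < 0) := by
  rintro ⟨hP, hQ⟩
  rcases le_total (4 * b ^ 2) (e ^ 2) with h | h
  · exact (einsteinP_nonneg a d h).not_gt hP
  · exact (einsteinQ_nonneg a d h).not_gt hQ

/-- The two quantities arising from the generalized Einstein equation on
`(Sl₂(ℝ)×Sl₂(ℝ))/Δ_{1,1}SO(2)` cannot both be negative. -/
theorem not_both_neg (a b d e : ℝ) (ha : a ≠ 0) (hb : b ≠ 0) (he : e ≠ 0) :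
    ¬ ((1/2) * (a ^ 4 * e ^ 4 + (b ^ 2 - d ^ 2) ^ 2)
          + a ^ 2 * d ^ 2 * (e ^ 2 - 4 * b ^ 2) * (e ^ 2 + 4 * b ^ 2) < 0
        ∧ (1/2) * (a ^ 2 - b ^ 2 + d ^ 2) ^ 2 * e ^ 4
          + 4 * a ^ 4 * b ^ 2 * (4 * b ^ 2 - e ^ 2) < 0) :=
  not_both_neg_general a b d e
end

section
/- Every nonzero skew-symmetric bilinear form on the 3-dimensional real Lie algebra sl₂(ℝ) with a fixed inner product admits a Milnor basis: for any inner product on sl₂(ℝ) there exists an orthonormal basis A₁, A₂, A₃ and nonzero real numbers α, β, γ with [A₂,A₃] = αA₁, [A₃,A₁] = βA₂, [A₁,A₂] = γA₃. -/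
/-! Fix an orthonormal basis `e` of a 3-dimensional inner product space and let `×` be the cross
product of `e`-coordinates. Every alternating bilinear map `B` factors as `B x y = L (x × y)` for a
linear `L`, and `L` is self-adjoint as soon as every `B x` is traceless. In an orthonormal
eigenbasis `f` of `L`, the vector `f i × f j` is orthogonal to `f i` and `f j` and has length one,
so it is `±` the third basis vector and `B (f i) (f j)` is a multiple of it. For `sl₂(ℝ)` the
brackets span the whole algebra, which makes every `ad x` traceless and `L` invertible, so these
multiples are nonzero. -/

open Module LinearMap
open scoped RealInnerProductSpace InnerProductSpace Matrix

namespace OrthonormalBasis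

section RCLike

variable {ι 𝕜 E : Type*} [Fintype ι] [RCLike 𝕜] [NormedAddCommGroup E] [InnerProductSpace 𝕜 E]

theorem isSymmetric_of_inner_apply (b : OrthonormalBasis ι 𝕜 E) {T : E →ₗ[𝕜] E}
    (h : ∀ i j, ⟪T (b i), b j⟫_𝕜 = ⟪b i, T (b j)⟫_𝕜) : T.IsSymmetric := by
  have := LinearMap.ext_basis b.toBasis b.toBasis (B := (innerₛₗ 𝕜).comp T)
    (B' := (innerₛₗ 𝕜).compl₂ T) (by simpa using h)
  exact fun x y => LinearMap.congr_fun₂ this x y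

theorem eq_inner_smul_of_inner_eq_zero (b : OrthonormalBasis ι 𝕜 E) {i : ι} {v : E}
    (h : ∀ j, j ≠ i → ⟪b j, v⟫_𝕜 = 0) : v = ⟪b i, v⟫_𝕜 • b i := by
  classical
  conv_lhs => rw [← b.sum_repr' v]
  exact Finset.sum_eq_single i (fun j _ hj => by rw [h j hj, zero_smul]) (by simp)

end RCLike

variable {ι E : Type*} [Fintype ι] [NormedAddCommGroup E] [InnerProductSpace ℝ E]

theorem inner_eq_dotProduct (b : OrthonormalBasis ι ℝ E) (x y : E) :
    ⟪x, y⟫ = b.toBasis.equivFun x ⬝ᵥ b.toBasis.equivFun y := by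
  rw [← b.repr.inner_map_map, EuclideanSpace.inner_eq_star_dotProduct]
  simp [dotProduct, mul_comm]

variable (e : OrthonormalBasis (Fin 3) ℝ E)

noncomputable def cross : E →ₗ[ℝ] E →ₗ[ℝ] E :=
  (crossProduct.compl₁₂ e.toBasis.equivFun.toLinearMap e.toBasis.equivFun.toLinearMap).compr₂
    e.toBasis.equivFun.symm.toLinearMap

theorem equivFun_cross (x y : E) :
    e.toBasis.equivFun (e.cross x y) = e.toBasis.equivFun x ⨯₃ e.toBasis.equivFun y := by
  simp [cross]

theorem inner_self_cross (x y : E) : ⟪x, e.cross x y⟫ = 0 := by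
  rw [e.inner_eq_dotProduct, equivFun_cross, dot_self_cross]

theorem inner_cross_self (x y : E) : ⟪y, e.cross x y⟫ = 0 := by
  rw [e.inner_eq_dotProduct, equivFun_cross, dot_cross_self]

theorem inner_cross_cross (u v w x : E) :
    ⟪e.cross u v, e.cross w x⟫ = ⟪u, w⟫ * ⟪v, x⟫ - ⟪u, x⟫ * ⟪v, w⟫ := by
  simp only [e.inner_eq_dotProduct, equivFun_cross, cross_dot_cross]

theorem isAlt_cross : e.cross.IsAlt := fun x =>
  e.toBasis.equivFun.injective (by rw [equivFun_cross, cross_self, map_zero])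

theorem cross_one_two : e.cross (e 1) (e 2) = e 0 := by
  apply e.toBasis.equivFun.injective
  rw [equivFun_cross]
  ext k; fin_cases k <;> simp [cross_apply]

theorem cross_two_zero : e.cross (e 2) (e 0) = e 1 := by
  apply e.toBasis.equivFun.injective
  rw [equivFun_cross]
  ext k; fin_cases k <;> simp [cross_apply]

theorem cross_zero_one : e.cross (e 0) (e 1) = e 2 := by
  apply e.toBasis.equivFun.injective
  rw [equivFun_cross]
  ext k; fin_cases k <;> simp [cross_apply]

variable (B : E →ₗ[ℝ] E →ₗ[ℝ] E)

/-- Milnor's `L`: the linear map with `L (x × y) = B x y`. -/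
noncomputable def milnorMap : E →ₗ[ℝ] E :=
  e.toBasis.constr ℝ ![B (e 1) (e 2), B (e 2) (e 0), B (e 0) (e 1)]

theorem milnorMap_apply (k : Fin 3) :
    e.milnorMap B (e k) = ![B (e 1) (e 2), B (e 2) (e 0), B (e 0) (e 1)] k :=
  e.toBasis.constr_basis ℝ _ k

variable {B}

theorem milnorMap_cross (hB : B.IsAlt) (x y : E) : e.milnorMap B (e.cross x y) = B x y := by
  suffices e.cross.compr₂ (e.milnorMap B) = B from LinearMap.congr_fun₂ this x y
  refine LinearMap.ext_basis e.toBasis e.toBasis fun i j => ?_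
  have hc := e.isAlt_cross
  fin_cases i <;> fin_cases j <;>
    simp [milnorMap_apply, hB.self_eq_zero, hc.self_eq_zero, cross_one_two, cross_two_zero,
      cross_zero_one, ← hc.neg (e 0) (e 1), ← hc.neg (e 1) (e 2), ← hc.neg (e 2) (e 0),
      ← hB.neg (e 0) (e 1), ← hB.neg (e 1) (e 2), ← hB.neg (e 2) (e 0)]

theorem isSymmetric_milnorMap (hB : B.IsAlt) (htr : ∀ x, trace ℝ E (B x) = 0) :
    (e.milnorMap B).IsSymmetric := by
  have htr' (k : Fin 3) : ∑ i, ⟪e i, B (e k) (e i)⟫ = 0 := by rw [← trace_eq_sum_inner, htr]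
  have h0 := htr' 0
  have h1 := htr' 1
  have h2 := htr' 2
  simp only [Fin.sum_univ_three, hB.self_eq_zero, inner_zero_right, inner_neg_right,
    ← hB.neg (e 0) (e 1), ← hB.neg (e 1) (e 2), ← hB.neg (e 2) (e 0)] at h0 h1 h2
  refine e.isSymmetric_of_inner_apply fun i j => ?_
  fin_cases i <;> fin_cases j <;>
    simp only [Fin.zero_eta, Fin.mk_one, Fin.reduceFinMk, milnorMap_apply, Matrix.cons_val,
      real_inner_comm (e _)] <;> linarith

theorem surjective_milnorMap (hB : B.IsAlt)
    (hspan : Submodule.span ℝ {z | ∃ x y, B x y = z} = ⊤) :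
    Function.Surjective (e.milnorMap B) := by
  rw [← range_eq_top, eq_top_iff, ← hspan, Submodule.span_le]
  rintro _ ⟨x, y, rfl⟩
  exact ⟨e.cross x y, e.milnorMap_cross hB x y⟩

theorem exists_cross_eq_smul (f : OrthonormalBasis (Fin 3) ℝ E) {i j k : Fin 3} (hij : i ≠ j)
    (hk : ∀ l, l ≠ k → l = i ∨ l = j) : ∃ c : ℝ, c ≠ 0 ∧ e.cross (f i) (f j) = c • f k := by
  have hv := f.eq_inner_smul_of_inner_eq_zero (v := e.cross (f i) (f j)) (i := k) fun l hl => by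
    rcases hk l hl with rfl | rfl
    · exact e.inner_self_cross _ _
    · exact e.inner_cross_self _ _
  refine ⟨_, fun hc => ?_, hv⟩
  have hunit := e.inner_cross_cross (f i) (f j) (f i) (f j)
  rw [hv, hc, zero_smul, inner_zero_left] at hunit
  simp [f.inner_eq_ite, hij, hij.symm] at hunit

end OrthonormalBasis

theorem LinearMap.IsAlt.exists_milnorBasis {E : Type*} [NormedAddCommGroup E]
    [InnerProductSpace ℝ E] {B : E →ₗ[ℝ] E →ₗ[ℝ] E} (hB : B.IsAlt) (hE : finrank ℝ E = 3)
    (htr : ∀ x, trace ℝ E (B x) = 0)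
    (hspan : Submodule.span ℝ {z | ∃ x y, B x y = z} = ⊤) :
    ∃ f : OrthonormalBasis (Fin 3) ℝ E, ∃ α β γ : ℝ, α ≠ 0 ∧ β ≠ 0 ∧ γ ≠ 0 ∧
      B (f 1) (f 2) = α • f 0 ∧ B (f 2) (f 0) = β • f 1 ∧ B (f 0) (f 1) = γ • f 2 := by
  have : FiniteDimensional ℝ E := Module.finite_of_finrank_pos (by omega)
  let e := (stdOrthonormalBasis ℝ E).reindex (finCongr hE)
  have hT := e.isSymmetric_milnorMap hB htr
  let f := hT.eigenvectorBasis hE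
  have hinj : Function.Injective (e.milnorMap B) :=
    injective_iff_surjective.mpr (e.surjective_milnorMap hB hspan)
  have hcyclic {i j k : Fin 3} (hij : i ≠ j) (hk : ∀ l, l ≠ k → l = i ∨ l = j) :
      ∃ α : ℝ, α ≠ 0 ∧ B (f i) (f j) = α • f k := by
    obtain ⟨c, hc, hcross⟩ := e.exists_cross_eq_smul f hij hk
    have heig : e.milnorMap B (f k) = hT.eigenvalues hE k • f k := hT.apply_eigenvectorBasis hE k
    have hμ : hT.eigenvalues hE k ≠ 0 := fun h =>
      f.orthonormal.ne_zero k (hinj (by rw [heig, h, zero_smul, map_zero]))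
    refine ⟨c * hT.eigenvalues hE k, mul_ne_zero hc hμ, ?_⟩
    rw [← e.milnorMap_cross hB, hcross, map_smul, heig, smul_smul]
  obtain ⟨α, hα, h0⟩ := hcyclic (i := 1) (j := 2) (k := 0) (by decide) (by decide)
  obtain ⟨β, hβ, h1⟩ := hcyclic (i := 2) (j := 0) (k := 1) (by decide) (by decide)
  obtain ⟨γ, hγ, h2⟩ := hcyclic (i := 0) (j := 1) (k := 2) (by decide) (by decide)
  exact ⟨f, α, β, γ, hα, hβ, hγ, h0, h1, h2⟩

theorem LieAlgebra.trace_ad_eq_zero_of_span_lie_eq_top {R L : Type*} [CommRing R] [LieRing L]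
    [LieAlgebra R L] (h : Submodule.span R {z | ∃ x y : L, ⁅x, y⁆ = z} = ⊤) (x : L) :
    trace R L (ad R L x) = 0 := by
  refine LieModule.trace_toEnd_eq_zero_of_mem_lcs R L L le_rfl ?_
  rw [LieModule.lowerCentralSeries_succ, LieModule.lowerCentralSeries_zero,
    ← LieSubmodule.mem_toSubmodule, LieSubmodule.lieIdeal_oper_eq_linear_span']
  simp [h]

namespace LieAlgebra.SpecialLinear

theorem finrank_sl_fin_two : finrank ℝ (sl (Fin 2) ℝ) = 3 := by
  have h := (Matrix.traceLinearMap (Fin 2) ℝ ℝ).finrank_range_add_finrank_ker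
  rw [range_eq_top.mpr Matrix.trace_surjective, finrank_top, finrank_matrix] at h
  change finrank ℝ (ker (Matrix.traceLinearMap (Fin 2) ℝ ℝ)) = 3
  simp only [Module.finrank_self, Fintype.card_fin] at h
  omega

theorem span_lie_sl_fin_two : Submodule.span ℝ {z | ∃ x y : sl (Fin 2) ℝ, ⁅x, y⁆ = z} = ⊤ := by
  refine Submodule.eq_top_iff'.mpr fun z => ?_
  let E := single (0 : Fin 2) 1 (by decide) (1 : ℝ)
  let F := single (1 : Fin 2) 0 (by decide) (1 : ℝ)
  let H := singleSubSingle (0 : Fin 2) 1 (1 : ℝ)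
  have hz : z = ⁅E, z.1 0 0 • F⁆ + ⁅H, (z.1 0 1 / 2) • E⁆ + ⁅(z.1 1 0 / 2) • F, H⁆ := by
    have htr : Matrix.trace z.1 = 0 := z.2
    rw [Matrix.trace_fin_two] at htr
    ext i j
    fin_cases i <;> fin_cases j <;>
      simp [E, F, H, Ring.lie_def, Matrix.mul_apply, Matrix.single_apply] <;> linarith
  rw [hz]
  refine add_mem (add_mem ?_ ?_) ?_ <;> exact Submodule.subset_span ⟨_, _, rfl⟩

end LieAlgebra.SpecialLinear

noncomputable abbrev LinearMap.BilinForm.toInnerProductSpaceCore {V : Type*} [AddCommGroup V]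
    [Module ℝ V] (ip : LinearMap.BilinForm ℝ V) (hsymm : ∀ x y, ip x y = ip y x)
    (hpos : ∀ x, x ≠ 0 → 0 < ip x x) : InnerProductSpace.Core ℝ V where
  inner x y := ip x y
  conj_inner_symm x y := hsymm y x
  re_inner_nonneg x := by
    rcases eq_or_ne x 0 with rfl | hx
    · simp
    · exact (hpos x hx).le
  add_left x y z := by simp
  smul_left x y r := by simp
  definite x h := by
    by_contra hx
    exact (hpos x hx).ne' h

open LieAlgebra.SpecialLinear in
/-- Milnor's lemma for `sl₂(ℝ)`: for any inner product (positive-definite symmetric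
bilinear form) on `sl₂(ℝ)` there is an orthonormal basis `A₁, A₂, A₃` and nonzero reals
`α, β, γ` with `[A₂,A₃] = αA₁`, `[A₃,A₁] = βA₂`, `[A₁,A₂] = γA₃`. -/
theorem sl2R_milnor_basis
    (ip : ↥(LieAlgebra.SpecialLinear.sl (Fin 2) ℝ) →ₗ[ℝ]
      ↥(LieAlgebra.SpecialLinear.sl (Fin 2) ℝ) →ₗ[ℝ] ℝ)
    (ipsymm : ∀ X Y, ip X Y = ip Y X)
    (ippos : ∀ X, X ≠ 0 → 0 < ip X X) :
    ∃ b : Module.Basis (Fin 3) ℝ ↥(LieAlgebra.SpecialLinear.sl (Fin 2) ℝ),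
      (∀ i j, ip (b i) (b j) = if i = j then 1 else 0) ∧
      ∃ α β γ : ℝ, α ≠ 0 ∧ β ≠ 0 ∧ γ ≠ 0 ∧
        ⁅b 1, b 2⁆ = α • b 0 ∧ ⁅b 2, b 0⁆ = β • b 1 ∧ ⁅b 0, b 1⁆ = γ • b 2 := by
  have hspan := span_lie_sl_fin_two
  have hB : (LieAlgebra.ad ℝ (sl (Fin 2) ℝ) :
      sl (Fin 2) ℝ →ₗ[ℝ] Module.End ℝ (sl (Fin 2) ℝ)).IsAlt := fun x => lie_self x
  let core := LinearMap.BilinForm.toInnerProductSpaceCore ip ipsymm ippos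
  let : NormedAddCommGroup (sl (Fin 2) ℝ) := core.toNormedAddCommGroup
  let : InnerProductSpace ℝ (sl (Fin 2) ℝ) := .ofCore core.toCore
  obtain ⟨f, α, β, γ, hα, hβ, hγ, h0, h1, h2⟩ := hB.exists_milnorBasis finrank_sl_fin_two
    (LieAlgebra.trace_ad_eq_zero_of_span_lie_eq_top hspan) (by simpa using hspan)
  exact ⟨f.toBasis, fun i j => f.inner_eq_ite i j, α, β, γ, hα, hβ, hγ,
    by simpa using h0, by simpa using h1, by simpa using h2⟩
end
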